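/- arXiv:2510.21462 — 2 statements merged into one kernel-verified Lean document; each statement's English description precedes it below -/
import Mathlib

section
/- Let k ≥ 1, c ≥ 1, and ε ∈ ℝ, and let M := (1 − 2ε)·S + ε·(I + J) on the index type Fin c × Fin k. Then M · M₁ = ε · M₁, where M₁ := I − (1/k)·S. -/
/-! Since `S² = k S` and `J S = k J`, both `S` and `J` are killed by right multiplication with
`M₁ = I − (1/k) S`; of `M` only the summand `ε I` survives. -/

open Matrix Finset

/-- The all-ones matrix on `Fin c × Fin k`. -/
def Jmat (c k : ℕ) : Matrix (Fin c × Fin k) (Fin c × Fin k) ℝ :=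
  Matrix.of fun _ _ => 1

/-- The block matrix `S = I_c ⊗ J_k`: `S ((a,p), (b,q)) = 1` iff `a = b`. -/
def Smat (c k : ℕ) : Matrix (Fin c × Fin k) (Fin c × Fin k) ℝ :=
  Matrix.of fun p q => if p.1 = q.1 then 1 else 0

/-- The projection `M₁ = I − (1/k) S`. -/
noncomputable def M1 (c k : ℕ) : Matrix (Fin c × Fin k) (Fin c × Fin k) ℝ :=
  1 - ((k : ℝ))⁻¹ • Smat c k

/-- The projection `M₂ = (1/k) S − (1/(kc)) J`. -/
noncomputable def M2 (c k : ℕ) : Matrix (Fin c × Fin k) (Fin c × Fin k) ℝ :=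
  ((k : ℝ))⁻¹ • Smat c k - ((k : ℝ) * (c : ℝ))⁻¹ • Jmat c k

/-- The projection `M₃ = (1/(kc)) J`. -/
noncomputable def M3 (c k : ℕ) : Matrix (Fin c × Fin k) (Fin c × Fin k) ℝ :=
  ((k : ℝ) * (c : ℝ))⁻¹ • Jmat c k

/-- The matrix `M = (1 − 2ε) S + ε (I + J)`. -/
noncomputable def Mmat (c k : ℕ) (ε : ℝ) : Matrix (Fin c × Fin k) (Fin c × Fin k) ℝ :=
  (1 - 2 * ε) • Smat c k + ε • ((1 : Matrix (Fin c × Fin k) (Fin c × Fin k) ℝ) + Jmat c k)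

lemma Smat_mul_self (c k : ℕ) : Smat c k * Smat c k = (k : ℝ) • Smat c k := by
  ext ⟨a, p⟩ ⟨b, q⟩
  simp [Matrix.mul_apply, Fintype.sum_prod_type, Smat, eq_comm, apply_ite Finset.card]

lemma Jmat_mul_Smat (c k : ℕ) : Jmat c k * Smat c k = (k : ℝ) • Jmat c k := by
  ext ⟨a, p⟩ ⟨b, q⟩
  simp only [Matrix.mul_apply, Fintype.sum_prod_type, Smat, Jmat, of_apply, one_mul]
  simp [apply_ite Finset.card]

lemma Smat_mul_M1 {c k : ℕ} (hk : (k : ℝ) ≠ 0) : Smat c k * M1 c k = 0 := by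
  rw [M1, Matrix.mul_sub, Matrix.mul_one, Matrix.mul_smul, Smat_mul_self, inv_smul_smul₀ hk,
    sub_self]

lemma Jmat_mul_M1 {c k : ℕ} (hk : (k : ℝ) ≠ 0) : Jmat c k * M1 c k = 0 := by
  rw [M1, Matrix.mul_sub, Matrix.mul_one, Matrix.mul_smul, Jmat_mul_Smat, inv_smul_smul₀ hk,
    sub_self]

theorem Mmat_mul_M1_general {c k : ℕ} (hk : 1 ≤ k) (ε : ℝ) :
    Mmat c k ε * M1 c k = ε • M1 c k := by
  have hk0 : (k : ℝ) ≠ 0 := Nat.cast_ne_zero.mpr (by omega)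
  rw [Mmat, Matrix.add_mul, Matrix.smul_mul, Matrix.smul_mul, Matrix.add_mul, Matrix.one_mul,
    Smat_mul_M1 hk0, Jmat_mul_M1 hk0, smul_zero, add_zero, zero_add]

/-- `M · M₁ = ε · M₁`. -/
theorem Mmat_mul_M1 {c k : ℕ} (hk : 1 ≤ k) (hc : 1 ≤ c) (ε : ℝ) :
    Mmat c k ε * M1 c k = ε • M1 c k :=
  Mmat_mul_M1_general hk ε
end

section
/- Let k ≥ 1, c ≥ 1, and ε ∈ ℝ. The matrix M := (1 − 2ε)·S + ε·(I + J) on the index type Fin c × Fin k admits the spectral decomposition M = λ₁·M₁ + λ₂·M₂ + λ₃·M₃, where λ₁ := ε, λ₂ := (1 − 2ε)·k + ε, λ₃ := k·(1 − 2ε + ε·c) + ε, and M₁ := I − (1/k)·S, M₂ := (1/k)·S − (1/(kc))·J, M₃ := (1/(kc))·J. -/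
open Matrix Finset

/-- Spectral decomposition `M = λ₁ M₁ + λ₂ M₂ + λ₃ M₃`. -/
theorem Mmat_spectral_decomposition {c k : ℕ} (hk : 1 ≤ k) (hc : 1 ≤ c) (ε : ℝ) :
    Mmat c k ε
      = ε • M1 c k
        + ((1 - 2 * ε) * (k : ℝ) + ε) • M2 c k
        + ((k : ℝ) * (1 - 2 * ε + ε * (c : ℝ)) + ε) • M3 c k := by
  have hk' : (k:ℝ) ≠ 0 := Nat.cast_ne_zero.2 (by omega)
  have hc' : (c:ℝ) ≠ 0 := Nat.cast_ne_zero.2 (by omega)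
  ext p q
  simp only [Mmat, M1, M2, M3, Smat, Jmat, Matrix.add_apply, Matrix.sub_apply,
    Matrix.smul_apply, Matrix.one_apply, Matrix.of_apply, smul_eq_mul, Prod.ext_iff]
  by_cases h1 : p.1 = q.1 <;> by_cases h2 : p.2 = q.2 <;>
    simp [h1, h2] <;> field_simp <;> ring
end
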